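/- Let π be a two-stack sortable permutation of length n, written as π = π_ℓ·(n)·π_r, and suppose π_r is nonempty. Then at most one element of π_ℓ is larger than the minimum of π_r. -/

import Mathlib

/-!
Since `n` is the largest entry, `S π = S πl ++ S πr ++ [n]` and
`S (S π) = S (S πl ++ S πr) ++ [n]`, so `S πl ++ S πr` is sorted by one pass of `S` and hence
avoids the pattern 231. If two entries `u < v` of `πl` exceed `m ∈ πr`, then `u` precedes the
maximum of `πl` in `S πl` (which ends with it), and `u`, `max πl`, `m` form a 231 pattern in
`S πl ++ S πr`.
-/

namespace TSP

theorem foldr_max_mem {α : Type} [LinearOrder α] (x : α) (l : List α) :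
    l.foldr max x ∈ x :: l := by
  induction l with
  | nil => simp
  | cons a t ih =>
    simp only [List.foldr_cons]
    rcases max_choice a (t.foldr max x) with h | h <;> rw [h]
    · simp
    · rcases List.mem_cons.mp ih with h' | h'
      · rw [h']; simp
      · exact List.mem_cons.mpr (Or.inr (List.mem_cons.mpr (Or.inr h')))

theorem length_takeWhile_lt {α : Type} [DecidableEq α] {m : α} {l : List α}
    (h : m ∈ l) : (l.takeWhile (· ≠ m)).length < l.length := by
  have hd : l.dropWhile (· ≠ m) ≠ [] := by
    intro hnil
    have := List.dropWhile_eq_nil_iff.mp hnil m h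
    simp at this
  have hsum : (l.takeWhile (· ≠ m)).length + (l.dropWhile (· ≠ m)).length = l.length := by
    rw [← List.length_append, List.takeWhile_append_dropWhile]
  have : 0 < (l.dropWhile (· ≠ m)).length := List.length_pos_iff.mpr hd
  omega

theorem length_tail_dropWhile_lt {α : Type} [DecidableEq α] {m : α} {l : List α}
    (h : l ≠ []) : ((l.dropWhile (· ≠ m)).tail).length < l.length := by
  have hsum : (l.takeWhile (· ≠ m)).length + (l.dropWhile (· ≠ m)).length = l.length := by
    rw [← List.length_append, List.takeWhile_append_dropWhile]
  have h2 : ((l.dropWhile (· ≠ m)).tail).length = (l.dropWhile (· ≠ m)).length - 1 :=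
    List.length_tail
  have : 0 < l.length := List.length_pos_iff.mpr h
  omega

/-- The stack-sorting operator `S`: `S(ε) = ε`, and if `A` is nonempty with
largest element `m` and `A = A_L · (m) · A_R`, then `S(A) = S(A_L) · S(A_R) · (m)`. -/
def S {α : Type} [LinearOrder α] : List α → List α
  | [] => []
  | x :: l =>
    let m := l.foldr max x
    S ((x :: l).takeWhile (· ≠ m)) ++ S (((x :: l).dropWhile (· ≠ m)).tail) ++ [m]
termination_by l => l.length
decreasing_by
  · exact length_takeWhile_lt (by simpa [List.foldr_attach] using foldr_max_mem x l)
  · exact length_tail_dropWhile_lt (by simp)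

/-- The identity permutation `id_n = (1, 2, …, n)` as a list. -/
def idPerm (n : ℕ) : List ℕ := List.range' 1 n

/-- `l` is a permutation of `{1, …, n}` (viewed as a sequence). -/
def IsPermOf (n : ℕ) (l : List ℕ) : Prop := l.Perm (idPerm n)

/-- `l` is a two-stack sortable permutation (of `{1, …, len l}`). -/
def Is2SS (l : List ℕ) : Prop := IsPermOf l.length l ∧ S (S l) = idPerm l.length

/-- `σ^{+k}`: add `k` to every entry. -/
def shift (k : ℕ) (l : List ℕ) : List ℕ := l.map (· + k)

/-- `σ^{+(k1,m,k2)}`: add `k1` to every entry strictly smaller than `m`, `k2` to the others. -/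
def shift3 (k1 m k2 : ℕ) (l : List ℕ) : List ℕ :=
  l.map (fun a => if a < m then a + k1 else a + k2)

/-- Standardization `P(A)`: the permutation of `{1,…,len A}` in the same relative order. -/
def stand (l : List ℕ) : List ℕ := l.map (fun a => (l.filter (fun b => b ≤ a)).length)

/-- Avoidance of the pattern 231: no positions `i < j < k` with `l(k) < l(i) < l(j)`. -/
def Avoids231 (l : List ℕ) : Prop :=
  ¬ ∃ i j k, i < j ∧ j < k ∧ k < l.length ∧
      l.getD k 0 < l.getD i 0 ∧ l.getD i 0 < l.getD j 0

/-- The list of values of the left-to-right maxima of `l`, in order. -/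
def lrMaxima (l : List ℕ) : List ℕ :=
  ((List.range l.length).filter
    (fun i => (l.take i).all (fun b => b < l.getD i 0))).map (fun i => l.getD i 0)

/-- `lmax`: the number of left-to-right maxima. -/
def lmax (l : List ℕ) : ℕ :=
  (List.range l.length).countP (fun i => (l.take i).all (fun b => b < l.getD i 0))

/-- `rmax`: the number of right-to-left maxima. -/
def rmax (l : List ℕ) : ℕ :=
  (List.range l.length).countP (fun i => (l.drop (i+1)).all (fun b => b < l.getD i 0))

/-- `asc`: the number of ascents. -/
def asc (l : List ℕ) : ℕ :=
  (List.range (l.length - 1)).countP (fun i => l.getD i 0 < l.getD (i+1) 0)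

/-- `des`: the number of descents. -/
def des (l : List ℕ) : ℕ :=
  (List.range (l.length - 1)).countP (fun i => l.getD (i+1) 0 < l.getD i 0)

/-- `slmax(π)`: the number of left-to-right maxima of `S(π)`. -/
def slmax (l : List ℕ) : ℕ := lmax (S l)

/-- `sldes(π)`: the number of entries `a` that precede `a - 1` in `S(π)`. -/
def sldes (l : List ℕ) : ℕ :=
  (List.range (S l).length).countP
    (fun i => ((S l).drop (i+1)).any (fun b => b + 1 = (S l).getD i 0))

/-- The construction `C1(π1, π2) = π1 · (k+ℓ+1) · π2^{+k}`. -/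
def C1 (p1 p2 : List ℕ) : List ℕ :=
  p1 ++ (p1.length + p2.length + 1) :: shift p1.length p2

/-- The `i`-th left-to-right maximum `a_i` of `S(π2)` (1-indexed). -/
def lrm (p2 : List ℕ) (i : ℕ) : ℕ := (lrMaxima (S p2)).getD (i - 1) 0

/-- The construction `C2(π1, π2, i) = π1^{+(0,k,a_i)} · (k+ℓ+1) · π2^{+(k-1,a_i+1,k)}`. -/
def C2 (p1 p2 : List ℕ) (i : ℕ) : List ℕ :=
  shift3 0 p1.length (lrm p2 i) p1 ++
    (p1.length + p2.length + 1) :: shift3 (p1.length - 1) (lrm p2 i + 1) p1.length p2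

/-- The decomposition `D(π) = (P(π_ℓ), P(π_r))`, where `π = π_ℓ · (n) · π_r`
with `n` the largest entry of `π`. -/
def D (l : List ℕ) : List ℕ × List ℕ :=
  match l with
  | [] => ([], [])
  | x :: t =>
    let m := t.foldr max x
    (stand ((x :: t).takeWhile (· ≠ m)), stand (((x :: t).dropWhile (· ≠ m)).tail))

section StackSorting

variable {α : Type} [LinearOrder α]

theorem le_foldr_max {x y : α} {l : List α} (h : y ∈ x :: l) : y ≤ l.foldr max x := by
  induction l with
  | nil => simp_all
  | cons a t ih =>
    simp only [List.mem_cons, List.foldr_cons, le_max_iff] at h ⊢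
    rcases h with rfl | rfl | h
    · exact Or.inr (ih (.head _))
    · exact Or.inl le_rfl
    · exact Or.inr (ih (.tail _ h))

theorem S_append_cons_of_forall_lt {A B : List α} {m : α} (hA : ∀ y ∈ A, y < m)
    (hB : ∀ y ∈ B, y ≤ m) : S (A ++ m :: B) = S A ++ S B ++ [m] := by
  obtain ⟨x, t, hxt⟩ := List.exists_cons_of_ne_nil (List.append_ne_nil_of_right_ne_nil A
    (List.cons_ne_nil m B))
  have hle : ∀ y ∈ x :: t, y ≤ m := by
    rw [← hxt]
    intro y hy
    rcases List.mem_append.mp hy with hy | hy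
    · exact (hA y hy).le
    · exact (List.mem_cons.mp hy).elim le_of_eq (hB y)
  have hmax : t.foldr max x = m :=
    le_antisymm (hle _ (foldr_max_mem x t)) (le_foldr_max (by simp [← hxt]))
  have hne : ∀ y ∈ A, y ≠ m := fun y hy => (hA y hy).ne
  rw [hxt, S, hmax, ← hxt, List.takeWhile_append_of_pos (by simpa using hne),
    List.dropWhile_append_of_pos (by simpa using hne)]
  simp

theorem exists_eq_append_cons_max {σ : List α} (hσ : σ ≠ []) :
    ∃ L m R, σ = L ++ m :: R ∧ (∀ y ∈ L, y < m) ∧ ∀ y ∈ R, y ≤ m := by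
  induction σ with
  | nil => exact absurd rfl hσ
  | cons x t ih =>
    rcases eq_or_ne t [] with rfl | ht
    · exact ⟨[], x, [], rfl, by simp, by simp⟩
    obtain ⟨L, m, R, rfl, hL, hR⟩ := ih ht
    rcases lt_or_ge x m with hxm | hmx
    · refine ⟨x :: L, m, R, rfl, ?_, hR⟩
      simpa [hxm] using hL
    · refine ⟨[], x, L ++ m :: R, rfl, by simp, ?_⟩
      simp only [List.mem_append, List.mem_cons]
      rintro y (hy | rfl | hy)
      exacts [(hL y hy).le.trans hmx, hmx, (hR y hy).trans hmx]

@[elab_as_elim]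
theorem induction_on_max_split {motive : List α → Prop} (σ : List α) (nil : motive [])
    (split : ∀ L m R, (∀ y ∈ L, y < m) → (∀ y ∈ R, y ≤ m) → motive L → motive R →
      motive (L ++ m :: R)) : motive σ := by
  induction h : σ.length using Nat.strong_induction_on generalizing σ with
  | _ k ih =>
    rcases eq_or_ne σ [] with rfl | hσ
    · exact nil
    obtain ⟨L, m, R, rfl, hL, hR⟩ := exists_eq_append_cons_max hσ
    simp only [List.length_append, List.length_cons] at h
    exact split L m R hL hR (ih _ (by omega) L rfl) (ih _ (by omega) R rfl)

theorem S_perm (σ : List α) : (S σ).Perm σ := by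
  induction σ using induction_on_max_split with
  | nil => simp [S]
  | split L m R hL hR ihL ihR =>
    rw [S_append_cons_of_forall_lt hL hR]
    exact (List.perm_append_singleton _ _).trans
      ((ihL.append ihR).cons m |>.trans List.perm_middle.symm)

theorem S_S_append_cons_of_forall_lt {A B : List α} {m : α} (hA : ∀ y ∈ A, y < m)
    (hB : ∀ y ∈ B, y < m) : S (S (A ++ m :: B)) = S (S A ++ S B) ++ [m] := by
  have hAB : ∀ y ∈ S A ++ S B, y < m := by
    simp only [List.mem_append, (S_perm A).mem_iff, (S_perm B).mem_iff]
    rintro y (hy | hy)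
    exacts [hA y hy, hB y hy]
  rw [S_append_cons_of_forall_lt hA fun y hy => (hB y hy).le,
    S_append_cons_of_forall_lt (B := []) hAB (by simp)]
  simp [S]

theorem not_sublist_of_sorted_S {σ : List α} (hσ : (S σ).Pairwise (· < ·)) {a b c : α}
    (hca : c < a) (hab : a < b) : ¬ [a, b, c].Sublist σ := by
  induction σ using induction_on_max_split with
  | nil => simp
  | split L m R hL hR ihL ihR =>
    rw [S_append_cons_of_forall_lt hL hR, List.pairwise_append, List.pairwise_append] at hσ
    have hLR : ∀ x ∈ L, ∀ y ∈ m :: R, x < y := by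
      rintro x hx y (_ | ⟨_, hy⟩)
      · exact hL x hx
      · exact hσ.1.2.2 x ((S_perm L).mem_iff.mpr hx) y ((S_perm R).mem_iff.mpr hy)
    -- Everything before the pivot `m` is below everything from `m` on, so `a` and `c` lie on
    -- the same side of it.
    intro h
    obtain ⟨s₁, s₂, hs, h₁, h₂⟩ := List.sublist_append_iff.mp h
    rcases s₁ with _ | ⟨_, _ | ⟨_, _ | ⟨_, _ | ⟨_, _⟩⟩⟩⟩ <;>
      simp only [List.nil_append, List.cons_append, List.cons.injEq, List.nil_eq,
        reduceCtorEq, and_false] at hs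
    · subst hs
      rcases List.sublist_cons_iff.mp h₂ with h₂ | ⟨r, hr, h₂⟩
      · exact ihR hσ.1.2.1 h₂
      · simp only [List.cons.injEq] at hr
        obtain ⟨rfl, rfl⟩ := hr
        exact (hab.trans_le (hR b (h₂.subset (by simp)))).false
    · obtain ⟨rfl, rfl⟩ := hs
      exact (hca.trans (hLR a (h₁.subset (by simp)) c (h₂.subset (by simp)))).false
    · obtain ⟨rfl, rfl, rfl⟩ := hs
      exact (hca.trans (hLR a (h₁.subset (by simp)) c (h₂.subset (by simp)))).false
    · obtain ⟨rfl, rfl, rfl, rfl⟩ := hs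
      exact ihL hσ.1.1 h₁

theorem exists_sublist_S_of_lt {A : List α} {a b : α} (ha : a ∈ A) (hb : b ∈ A) (hab : a < b) :
    ∃ M, a < M ∧ [a, M].Sublist (S A) := by
  obtain ⟨L, M, R, rfl, hL, hR⟩ := exists_eq_append_cons_max (List.ne_nil_of_mem ha)
  have hbM : b ≤ M := by
    simp only [List.mem_append, List.mem_cons] at hb
    rcases hb with hb | rfl | hb
    exacts [(hL b hb).le, le_rfl, hR b hb]
  have haM : a ≠ M := (hab.trans_le hbM).ne
  have ha' : a ∈ S L ++ S R := by
    simpa [(S_perm L).mem_iff, (S_perm R).mem_iff, haM] using ha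
  rw [S_append_cons_of_forall_lt hL hR]
  exact ⟨M, hab.trans_le hbM, (List.singleton_sublist.mpr ha').append (List.Sublist.refl [M])⟩

theorem eq_of_lt_of_lt_of_sorted_S_S {A B : List α} {M m u v : α} (hA : ∀ y ∈ A, y < M)
    (hB : ∀ y ∈ B, y < M) (hsort : (S (S (A ++ M :: B))).Pairwise (· < ·)) (hm : m ∈ B)
    (hu : u ∈ A) (hv : v ∈ A) (hmu : m < u) (hmv : m < v) : u = v := by
  rw [S_S_append_cons_of_forall_lt hA hB, List.pairwise_append] at hsort
  have hmSB : [m].Sublist (S B) := List.singleton_sublist.mpr ((S_perm B).mem_iff.mpr hm)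
  have no_lt : ∀ x ∈ A, ∀ y ∈ A, m < x → ¬ x < y := fun x hx y hy hmx hxy => by
    obtain ⟨M', hxM', hsub⟩ := exists_sublist_S_of_lt hx hy hxy
    exact not_sublist_of_sorted_S hsort.1 hmx hxM' (hsub.append hmSB)
  exact le_antisymm (not_lt.mp (no_lt v hv u hu hmv)) (not_lt.mp (no_lt u hu v hv hmu))

end StackSorting

theorem atMostOne_gt_min_general (n : ℕ) (π πl πr : List ℕ) (hπ : IsPermOf n π)
    (hπ2 : S (S π) = idPerm n) (hsplit : π = πl ++ n :: πr)
    (m : ℕ) (hm : m ∈ πr) :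
    (πl.filter (fun x => m < x)).length ≤ 1 := by
  subst hsplit
  have hnodup : (πl ++ n :: πr).Nodup := hπ.nodup_iff.mpr List.nodup_range'
  have hlt : ∀ y ∈ πl ++ πr, y < n := fun y hy => by
    have hyn : y ≠ n :=
      ne_of_mem_of_not_mem hy (List.nodup_cons.mp (List.nodup_middle.mp hnodup)).1
    have := List.mem_range'_1.mp
      (hπ.subset (List.perm_middle.mem_iff.mpr (List.mem_cons_of_mem n hy)))
    omega
  have hsort : (S (S (πl ++ n :: πr))).Pairwise (· < ·) := hπ2 ▸ List.pairwise_lt_range'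
  rw [← List.toFinset_card_of_nodup ((List.nodup_append.mp hnodup).1.filter _),
    Finset.card_le_one_iff]
  intro u v hu hv
  simp only [List.mem_toFinset, List.mem_filter, decide_eq_true_eq] at hu hv
  exact eq_of_lt_of_lt_of_sorted_S_S (fun y hy => hlt y (List.mem_append_left πr hy))
    (fun y hy => hlt y (List.mem_append_right πl hy)) hsort hm hu.1 hv.1 hu.2 hv.2

/-- Let `π` be a two-stack sortable permutation of length `n`, written as
`π = π_ℓ · (n) · π_r` with `π_r` nonempty. Then at most one element of `π_ℓ` is larger
than the minimum of `π_r`. -/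
theorem atMostOne_gt_min (n : ℕ) (π πl πr : List ℕ) (hπ : IsPermOf n π)
    (hπ2 : S (S π) = idPerm n) (hlen : π.length = n) (hsplit : π = πl ++ n :: πr)
    (hne : πr ≠ []) (m : ℕ) (hm : m ∈ πr) (hmin : ∀ y ∈ πr, m ≤ y) :
    (πl.filter (fun x => m < x)).length ≤ 1 :=
  atMostOne_gt_min_general n π πl πr hπ hπ2 hsplit m hm

end TSP
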